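/- arXiv:1210.6205 — 2 statements merged into one kernel-verified Lean document; each statement's English description precedes it below -/
import Mathlib

section
/- Let p be a polynomial in two complex variables z, w satisfying z·(∂p/∂z) = w·(∂p/∂w) identically. Then there exists a polynomial ψ in one variable such that p(z,w) = ψ(z·w). -/
open MvPolynomial

lemma coeff_X_mul_pderiv (i : Fin 2) (p : MvPolynomial (Fin 2) ℂ) (m : Fin 2 →₀ ℕ) :
    coeff m (X i * pderiv i p) = (m i : ℂ) * coeff m p := by
  classical
  induction p using MvPolynomial.induction_on' with
  | add q r hq hr =>
    simp only [map_add, mul_add, coeff_add, hq, hr, mul_add]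
  | monomial s a =>
    rw [pderiv_monomial, coeff_X_mul', coeff_monomial, coeff_monomial]
    by_cases hm : i ∈ m.support
    · have hmi : m i ≠ 0 := Finsupp.mem_support_iff.mp hm
      rw [if_pos hm]
      by_cases hms : s = m
      · subst hms
        rw [if_pos rfl, if_pos rfl, mul_comm]
      · rw [if_neg hms]
        by_cases hsub : s - Finsupp.single i 1 = m - Finsupp.single i 1
        · rw [if_pos hsub]
          have hsi : s i = 0 := by
            by_contra hsi
            apply hms
            have h2 := fun j => congrArg (fun f => f j) hsub
            ext j
            have h3 := h2 j
            simp only [Finsupp.tsub_apply, Finsupp.single_apply] at h3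
            rcases eq_or_ne i j with rfl | hij
            · rw [if_pos rfl] at h3; omega
            · rw [if_neg hij] at h3; omega
          simp [hsi]
        · rw [if_neg hsub, mul_zero]
    · rw [if_neg hm]
      have hmi : m i = 0 := by simpa using hm
      by_cases hms : s = m
      · rw [if_pos hms]
        simp [hmi]
      · rw [if_neg hms, mul_zero]

/-- A polynomial in two complex variables `z, w` satisfying `z ∂p/∂z = w ∂p/∂w`
is a polynomial in the product `z w`. -/
theorem euler_invariant_polynomial (p : MvPolynomial (Fin 2) ℂ)
    (h : X 0 * pderiv 0 p = X 1 * pderiv 1 p) :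
    ∃ ψ : Polynomial ℂ,
      p = Polynomial.aeval ((X 0 : MvPolynomial (Fin 2) ℂ) * X 1) ψ := by
  classical
  have key : ∀ m ∈ p.support, m 0 = m 1 := by
    intro m hm
    have hc : coeff m p ≠ 0 := Finsupp.mem_support_iff.mp hm
    have h1 : (m 0 : ℂ) * coeff m p = (m 1 : ℂ) * coeff m p := by
      rw [← coeff_X_mul_pderiv 0 p m, ← coeff_X_mul_pderiv 1 p m, h]
    have : (m 0 : ℂ) = (m 1 : ℂ) := mul_right_cancel₀ hc h1
    exact_mod_cast this
  refine ⟨∑ m ∈ p.support, Polynomial.C (coeff m p) * Polynomial.X ^ (m 0), ?_⟩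
  rw [map_sum]
  conv_lhs => rw [p.as_sum]
  refine Finset.sum_congr rfl fun m hm => ?_
  have hmm : m = Finsupp.single 0 (m 0) + Finsupp.single 1 (m 0) := by
    ext j
    fin_cases j
    · simp
    · simp [key m hm]
  rw [map_mul, map_pow, Polynomial.aeval_X, Polynomial.aeval_C, algebraMap_eq,
    mul_pow, X_pow_eq_monomial, X_pow_eq_monomial, monomial_mul, mul_one,
    C_mul_monomial, mul_one, ← hmm]
end

section
/- Let θ, δ be real numbers with θ ≠ 1 and δθ − 1 ≠ 0. Set c₁ = (δ−1)/(θ−1), p = (1−δ)/(δθ−1), q = (1−θ)/(δθ−1), and assume q ≠ 0. Define H(x,y) = (1/q)·x^p·y^q·(−1 + x + ((θ−1)/(δ−1))·y) for x, y > 0 (assuming also δ ≠ 1). Then H is a first integral of the vector field X(x,y) = x^{p−1} y^{q−1}·( x(−1 + x − θy), y(c₁ + δx − y) ), i.e. ∂H/∂x · X₁ + ∂H/∂y · X₂ = 0 for all x, y > 0. -/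
set_option maxHeartbeats 1000000 in
/-- The Hamiltonian `H(x,y) = (1/q) xᵖ y^q (−1 + x + ((θ−1)/(δ−1)) y)` is a first
integral of the vector field
`X(x,y) = x^{p−1} y^{q−1} (x(−1 + x − θy), y(c₁ + δx − y))` on the positive quadrant. -/
theorem hamiltonian_first_integral (θ δ : ℝ) (hθ : θ ≠ 1) (hδ : δ ≠ 1)
    (hδθ : δ * θ - 1 ≠ 0)
    (c₁ p q : ℝ) (hc₁ : c₁ = (δ - 1) / (θ - 1)) (hp : p = (1 - δ) / (δ * θ - 1))
    (hq : q = (1 - θ) / (δ * θ - 1)) (hq0 : q ≠ 0)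
    (H : ℝ → ℝ → ℝ)
    (hH : ∀ x y : ℝ, H x y =
      (1 / q) * x ^ p * y ^ q * (-1 + x + ((θ - 1) / (δ - 1)) * y)) :
    ∀ x y : ℝ, 0 < x → 0 < y →
      deriv (fun t => H t y) x *
          (x ^ (p - 1) * y ^ (q - 1) * (x * (-1 + x - θ * y))) +
        deriv (fun t => H x t) y *
          (x ^ (p - 1) * y ^ (q - 1) * (y * (c₁ + δ * x - y))) = 0 := by
  intro x y hx hy
  set k : ℝ := (θ - 1) / (δ - 1) with hk
  -- derivative in x
  have h1 : HasDerivAt (fun t : ℝ => t ^ p) (p * x ^ (p - 1)) x :=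
    Real.hasDerivAt_rpow_const (Or.inl hx.ne')
  have h2 : HasDerivAt (fun t : ℝ => -1 + t + k * y) 1 x := by
    simpa using ((hasDerivAt_id x).const_add (-1)).add_const (k * y)
  have hDx : HasDerivAt (fun t : ℝ => (1 / q) * t ^ p * y ^ q * (-1 + t + k * y))
      ((1 / q * (p * x ^ (p - 1)) * y ^ q) * (-1 + x + k * y)
        + (1 / q * x ^ p * y ^ q) * 1) x := by
    exact ((h1.const_mul (1 / q)).mul_const (y ^ q)).mul h2
  -- derivative in y
  have h3 : HasDerivAt (fun t : ℝ => t ^ q) (q * y ^ (q - 1)) y :=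
    Real.hasDerivAt_rpow_const (Or.inl hy.ne')
  have h4 : HasDerivAt (fun t : ℝ => -1 + x + k * t) k y := by
    simpa using (((hasDerivAt_id y).const_mul k).const_add (-1 + x))
  have hDy : HasDerivAt (fun t : ℝ => (1 / q) * x ^ p * t ^ q * (-1 + x + k * t))
      (((1 / q * x ^ p) * (q * y ^ (q - 1))) * (-1 + x + k * y)
        + (1 / q * x ^ p * y ^ q) * k) y := by
    exact ((h3.const_mul (1 / q * x ^ p)).mul h4)
  have e1 : deriv (fun t => H t y) x
      = (1 / q * (p * x ^ (p - 1)) * y ^ q) * (-1 + x + k * y)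
        + (1 / q * x ^ p * y ^ q) * 1 := by
    have : (fun t => H t y) = fun t : ℝ => (1 / q) * t ^ p * y ^ q * (-1 + t + k * y) := by
      funext t; rw [hH]
    rw [this, hDx.deriv]
  have e2 : deriv (fun t => H x t) y
      = ((1 / q * x ^ p) * (q * y ^ (q - 1))) * (-1 + x + k * y)
        + (1 / q * x ^ p * y ^ q) * k := by
    have : (fun t => H x t) = fun t : ℝ => (1 / q) * x ^ p * t ^ q * (-1 + x + k * t) := by
      funext t; rw [hH]
    rw [this, hDy.deriv]
  have hxp : x ^ p = x ^ (p - 1) * x := by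
    rw [← Real.rpow_add_one hx.ne' (p - 1)]; norm_num
  have hyq : y ^ q = y ^ (q - 1) * y := by
    rw [← Real.rpow_add_one hy.ne' (q - 1)]; norm_num
  have hθ1 : θ - 1 ≠ 0 := sub_ne_zero.mpr hθ
  have hδ1 : δ - 1 ≠ 0 := sub_ne_zero.mpr hδ
  have key : (p * (-1 + x + k * y) + x) * (-1 + x - θ * y)
      + (q * (-1 + x + k * y) + k * y) * (c₁ + δ * x - y) = 0 := by
    rw [hp, hq, hc₁, hk]
    field_simp
    ring
  rw [e1, e2, hxp, hyq]
  generalize x ^ (p - 1) = X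
  generalize y ^ (q - 1) = Y
  linear_combination (1 / q * X ^ 2 * Y ^ 2 * x * y) * key
end
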